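/- Let S ⊆ ℝ^N be an open convex set, f : S → ℝ twice continuously differentiable with sup_{x ∈ S} ‖∇²f(x)‖₂ ≤ L < ∞, let 0 < α < 1/L, and assume g(S) ⊆ S where g(x) = x − α∇f(x). Then the set of initial conditions x ∈ S for which the gradient descent iterates g^k(x) converge to a strict saddle point of f has Lebesgue measure zero. -/

import Mathlib

/-!
Near a strict saddle `p` the gradient step `g = id - α ∇f` is strictly differentiable with
derivative `A = 1 - α ∇²f(p)`, a positive operator (since `α ‖∇²f(p)‖ < 1`) with an eigenvalue
`> 1`. Let `U` be the span of the eigenvectors with eigenvalue `> 1`: `A` expands `U` by some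
`c > 1` and does not expand `Uᗮ`. A cone argument shows that two points whose orbits stay in a
small ball around `p` differ by at most twice the `Uᗮ`-component of their difference, so this
local stable set is a Lipschitz graph over the proper subspace `Uᗮ`, hence Lebesgue-null.
An orbit converging to a strict saddle eventually enters one of countably many such sets, and
since `‖g x - g y‖ ≥ (1 - α L) ‖x - y‖` on the forward-invariant convex set `S`, preimages of null
sets under the iterates of `g` are null within `S`.
-/

open MeasureTheory Filter Topology
open Set Metric
open scoped NNReal RealInnerProductSpace

theorem hausdorffMeasure_eq_zero_of_dist_le_mul_dist {X Y : Type*} [MetricSpace X]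
    [MeasurableSpace X] [BorelSpace X] [MetricSpace Y] [MeasurableSpace Y] [BorelSpace Y]
    {φ : X → Y} {s : Set X} {K : ℝ≥0} {d : ℝ} (hd : 0 ≤ d)
    (h : ∀ x ∈ s, ∀ y ∈ s, dist x y ≤ K * dist (φ x) (φ y)) (hφ : μH[d] (φ '' s) = 0) :
    μH[d] s = 0 := by
  have hanti : AntilipschitzWith K (s.domRestrict φ) :=
    AntilipschitzWith.of_le_mul_dist fun x y => h x x.2 y y.2
  refine le_antisymm ?_ zero_le
  calc μH[d] s = μH[d] (univ : Set s) := by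
        rw [← (isometry_subtype_coe (s := s)).hausdorffMeasure_image (Or.inl hd), image_univ,
          Subtype.range_coe]
    _ ≤ K ^ d * μH[d] (s.domRestrict φ '' univ) := hanti.le_hausdorffMeasure_image hd _
    _ = 0 := by rw [image_univ, range_domRestrict, hφ, mul_zero]

section FiniteDimensional

variable {E : Type*} [NormedAddCommGroup E] [InnerProductSpace ℝ E] [FiniteDimensional ℝ E]
  [MeasurableSpace E] [BorelSpace E]

theorem volume_eq_zero_iff_hausdorffMeasure_eq_zero {s : Set E} :
    volume s = 0 ↔ μH[Module.finrank ℝ E] s = 0 := by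
  rw [← InnerProductSpace.euclideanHausdorffMeasure_eq_volume,
    Measure.euclideanHausdorffMeasure_def, Measure.smul_apply, smul_eq_zero]
  simp [Measure.addHaarScalarFactor_volume_hausdorffMeasure_ne_zero]

theorem volume_eq_zero_of_dist_le_mul_dist {φ : E → E} {s : Set E} {K : ℝ≥0}
    (h : ∀ x ∈ s, ∀ y ∈ s, dist x y ≤ K * dist (φ x) (φ y)) (hφ : volume (φ '' s) = 0) :
    volume s = 0 := by
  rw [volume_eq_zero_iff_hausdorffMeasure_eq_zero] at hφ ⊢
  exact hausdorffMeasure_eq_zero_of_dist_le_mul_dist (Nat.cast_nonneg _) h hφ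

end FiniteDimensional

def localStableSet {X : Type*} (g : X → X) (V : Set X) : Set X :=
  {x | ∀ k, g^[k] x ∈ V}

theorem measure_setOf_tendsto_eq_zero {X : Type*} [TopologicalSpace X]
    [SecondCountableTopology X] [MeasurableSpace X] {μ : Measure X} {g : X → X} {s P : Set X}
    (hgs : MapsTo g s s) (hpre : ∀ Z, μ Z = 0 → μ (g ⁻¹' Z ∩ s) = 0)
    (hloc : ∀ p ∈ P, ∃ V ∈ 𝓝 p, μ (localStableSet g V) = 0) :
    μ {x ∈ s | ∃ p ∈ P, Tendsto (fun k => g^[k] x) atTop (𝓝 p)} = 0 := by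
  choose! V hV hVnull using hloc
  have hpre_iter : ∀ m Z, μ Z = 0 → μ ((g^[m]) ⁻¹' Z ∩ s) = 0 := by
    intro m
    induction m with
    | zero => simpa using fun Z hZ => measure_mono_null inter_subset_left hZ
    | succ m ih =>
      refine fun Z hZ => measure_mono_null ?_ (hpre _ (ih Z hZ))
      exact fun x hx => ⟨⟨by simpa [Function.iterate_succ_apply] using hx.1, hgs hx.2⟩, hx.2⟩
  obtain ⟨T, hTc, hTU⟩ := TopologicalSpace.isOpen_iUnion_countable
    (fun p : P => interior (V p)) fun _ => isOpen_interior
  have hcover : {x ∈ s | ∃ p ∈ P, Tendsto (fun k => g^[k] x) atTop (𝓝 p)} ⊆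
      ⋃ q ∈ T, ⋃ m, (g^[m]) ⁻¹' localStableSet g (V q) ∩ s := by
    rintro x ⟨hxs, p, hp, hx⟩
    have hpV : p ∈ ⋃ q ∈ T, interior (V q) := by
      rw [hTU, mem_iUnion]
      exact ⟨⟨p, hp⟩, mem_interior_iff_mem_nhds.2 (hV p hp)⟩
    obtain ⟨q, hqT, hpq⟩ := mem_iUnion₂.1 hpV
    obtain ⟨m, hm⟩ := (hx.eventually (isOpen_interior.mem_nhds hpq)).exists_forall_of_atTop
    refine mem_biUnion hqT (mem_iUnion.2 ⟨m, fun k => ?_, hxs⟩)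
    rw [← Function.iterate_add_apply]
    exact interior_subset (hm _ (Nat.le_add_left m k))
  refine measure_mono_null hcover ((measure_biUnion_null_iff hTc).2 fun q _ => ?_)
  exact measure_iUnion_null fun m => hpre_iter m _ (hVnull q q.2)

section InnerProductSpace

variable {E : Type*} [NormedAddCommGroup E] [InnerProductSpace ℝ E]

theorem Submodule.norm_le_norm_starProjection_add (U : Submodule ℝ E) [U.HasOrthogonalProjection]
    (d : E) : ‖d‖ ≤ ‖U.starProjection d‖ + ‖Uᗮ.starProjection d‖ := by
  conv_lhs => rw [← U.starProjection_add_starProjection_orthogonal d]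
  exact norm_add_le _ _

theorem Submodule.starProjection_apply_comm {U : Submodule ℝ E} [U.HasOrthogonalProjection]
    {T : E →ₗ[ℝ] E} (hU : U ∈ Module.End.invtSubmodule T)
    (hUo : Uᗮ ∈ Module.End.invtSubmodule T) (d : E) :
    U.starProjection (T d) = T (U.starProjection d) := by
  refine U.eq_starProjection_of_mem_orthogonal' (hU (U.starProjection_apply_mem d))
    (hUo (Uᗮ.starProjection_apply_mem d)) ?_
  rw [← map_add, U.starProjection_add_starProjection_orthogonal]

structure IsExpandingSplitting (A : E →L[ℝ] E) (U : Submodule ℝ E) [U.HasOrthogonalProjection]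
    (c : ℝ) : Prop where
  expand : ∀ d, c * ‖U.starProjection d‖ ≤ ‖U.starProjection (A d)‖
  nonexpand : ∀ d, ‖Uᗮ.starProjection (A d)‖ ≤ ‖Uᗮ.starProjection d‖

namespace IsExpandingSplitting

variable {A : E →L[ℝ] E} {U : Submodule ℝ E} [U.HasOrthogonalProjection] {c : ℝ}

theorem of_isSymmetric (hA : (A : E →ₗ[ℝ] E).IsSymmetric)
    (hU : U ∈ Module.End.invtSubmodule (A : E →ₗ[ℝ] E)) (hexp : ∀ u ∈ U, c * ‖u‖ ≤ ‖A u‖)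
    (hnon : ∀ w ∈ Uᗮ, ‖A w‖ ≤ ‖w‖) : IsExpandingSplitting A U c := by
  have hP : ∀ d, U.starProjection (A d) = A (U.starProjection d) :=
    Submodule.starProjection_apply_comm hU (hA.orthogonalComplement_mem_invtSubmodule hU)
  refine ⟨fun d => hP d ▸ hexp _ (U.starProjection_apply_mem d), fun d => ?_⟩
  rw [U.starProjection_orthogonal_val, U.starProjection_orthogonal_val, hP, ← map_sub,
    ← U.starProjection_orthogonal_val]
  exact hnon _ (Uᗮ.starProjection_apply_mem d)

theorem cone_step (h : IsExpandingSplitting A U c) {ε : ℝ} (hε : 0 ≤ ε) (hc : 1 + 4 * ε ≤ c)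
    {d d' : E} (hd : ‖Uᗮ.starProjection d‖ ≤ ‖U.starProjection d‖)
    (hd' : ‖d' - A d‖ ≤ ε * ‖d‖) :
    ‖Uᗮ.starProjection d'‖ ≤ ‖U.starProjection d'‖ ∧
      (c - 2 * ε) * ‖U.starProjection d‖ ≤ ‖U.starProjection d'‖ := by
  have herr : ‖d' - A d‖ ≤ 2 * ε * ‖U.starProjection d‖ := by
    nlinarith [U.norm_le_norm_starProjection_add d]
  have hP : ‖U.starProjection (A d)‖ - ‖U.starProjection d'‖ ≤ ‖d' - A d‖ := by
    refine (norm_sub_norm_le _ _).trans ?_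
    rw [← map_sub, norm_sub_rev]
    exact U.norm_starProjection_apply_le _
  have hQ : ‖Uᗮ.starProjection d'‖ - ‖Uᗮ.starProjection (A d)‖ ≤ ‖d' - A d‖ := by
    refine (norm_sub_norm_le _ _).trans ?_
    rw [← map_sub]
    exact Uᗮ.norm_starProjection_apply_le _
  have hexp := h.expand d
  have hnon := h.nonexpand d
  have hgap := mul_le_mul_of_nonneg_right hc (norm_nonneg (U.starProjection d))
  constructor <;> nlinarith

theorem cone_iterate (h : IsExpandingSplitting A U c) {ε : ℝ≥0} (hc : 1 + 4 * ε ≤ c)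
    {g : E → E} {B : Set E} (hg : ApproximatesLinearOn g A B ε) {x y : E}
    (hx : x ∈ localStableSet g B) (hy : y ∈ localStableSet g B)
    (hxy : ‖Uᗮ.starProjection (x - y)‖ ≤ ‖U.starProjection (x - y)‖) (k : ℕ) :
    ‖Uᗮ.starProjection (g^[k] x - g^[k] y)‖ ≤ ‖U.starProjection (g^[k] x - g^[k] y)‖ ∧
      (c - 2 * ε) ^ k * ‖U.starProjection (x - y)‖ ≤
        ‖U.starProjection (g^[k] x - g^[k] y)‖ := by
  induction k with
  | zero => simpa using hxy
  | succ k ih =>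
    obtain ⟨hcone, hstep⟩ := h.cone_step ε.2 hc ih.1 (hg _ (hx k) _ (hy k))
    rw [Function.iterate_succ_apply', Function.iterate_succ_apply', pow_succ']
    refine ⟨hcone, ?_⟩
    rw [mul_assoc]
    exact (mul_le_mul_of_nonneg_left ih.2 (by linarith [ε.2])).trans hstep

theorem norm_sub_le_of_mem_localStableSet (h : IsExpandingSplitting A U c) {ε : ℝ≥0}
    (hc : 1 + 4 * ε < c) {g : E → E} {B : Set E} (hB : Bornology.IsBounded B)
    (hg : ApproximatesLinearOn g A B ε) {x y : E}
    (hx : x ∈ localStableSet g B) (hy : y ∈ localStableSet g B) :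
    ‖x - y‖ ≤ 2 * ‖Uᗮ.starProjection (x - y)‖ := by
  have hsplit := U.norm_le_norm_starProjection_add (x - y)
  rcases lt_or_ge ‖U.starProjection (x - y)‖ ‖Uᗮ.starProjection (x - y)‖ with hout | hcone
  · linarith
  -- inside the cone the `U`-component grows like `(c - 2ε) ^ k` but stays bounded
  obtain ⟨R, hR⟩ := isBounded_iff.1 hB
  have hbound : ∀ k, (c - 2 * ε) ^ k * ‖U.starProjection (x - y)‖ ≤ R := fun k =>
    (h.cone_iterate hc.le hg hx hy hcone k).2.trans <|
      (U.norm_starProjection_apply_le _).trans <| by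
        simpa [dist_eq_norm] using hR (hx k) (hy k)
  have hP : ‖U.starProjection (x - y)‖ = 0 := by
    by_contra hne
    have hpos := (norm_nonneg _).lt_of_ne' hne
    obtain ⟨k, hk⟩ := pow_unbounded_of_one_lt (R / ‖U.starProjection (x - y)‖)
      (by linarith : 1 < c - 2 * ε)
    exact (hbound k).not_gt ((div_lt_iff₀ hpos).1 hk)
  linarith [norm_nonneg (Uᗮ.starProjection (x - y))]

theorem volume_localStableSet_eq_zero [FiniteDimensional ℝ E] [MeasurableSpace E] [BorelSpace E]
    (h : IsExpandingSplitting A U c) (hU : U ≠ ⊥) {ε : ℝ≥0} (hc : 1 + 4 * ε < c)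
    {g : E → E} {B : Set E} (hB : Bornology.IsBounded B) (hg : ApproximatesLinearOn g A B ε) :
    volume (localStableSet g B) = 0 := by
  refine volume_eq_zero_of_dist_le_mul_dist (φ := Uᗮ.starProjection) (K := 2)
    (fun x hx y hy => ?_) (measure_mono_null ?_ (Measure.addHaar_submodule volume Uᗮ ?_))
  · rw [dist_eq_norm, dist_eq_norm, ← map_sub]
    exact_mod_cast h.norm_sub_le_of_mem_localStableSet hc hB hg hx hy
  · rintro _ ⟨x, -, rfl⟩
    exact Uᗮ.starProjection_apply_mem x
  · rwa [Ne, Submodule.orthogonal_eq_top_iff]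

end IsExpandingSplitting

theorem LinearMap.IsSymmetric.inner_eigenvectorBasis_apply [FiniteDimensional ℝ E]
    {T : E →ₗ[ℝ] E} (hT : T.IsSymmetric) {n : ℕ} (hn : Module.finrank ℝ E = n) (i : Fin n)
    (d : E) :
    ⟪hT.eigenvectorBasis hn i, T d⟫ = hT.eigenvalues hn i * ⟪hT.eigenvectorBasis hn i, d⟫ := by
  rw [← hT, hT.apply_eigenvectorBasis, real_inner_smul_left]
  rfl

theorem LinearMap.IsSymmetric.norm_sq_apply_eq_sum [FiniteDimensional ℝ E] {T : E →ₗ[ℝ] E}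
    (hT : T.IsSymmetric) {n : ℕ} (hn : Module.finrank ℝ E = n) (d : E) :
    ‖T d‖ ^ 2 = ∑ i, hT.eigenvalues hn i ^ 2 * ⟪hT.eigenvectorBasis hn i, d⟫ ^ 2 := by
  simp_rw [← (hT.eigenvectorBasis hn).sum_sq_inner_right, hT.inner_eigenvectorBasis_apply,
    mul_pow]

theorem LinearMap.IsSymmetric.exists_lt_eigenvalues [FiniteDimensional ℝ E] {T : E →ₗ[ℝ] E}
    (hT : T.IsSymmetric) {n : ℕ} (hn : Module.finrank ℝ E = n) {r : ℝ} {v : E}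
    (hv : r * ‖v‖ ^ 2 < ⟪T v, v⟫) : ∃ i, r < hT.eigenvalues hn i := by
  by_contra! h
  refine hv.not_ge ?_
  set b := hT.eigenvectorBasis hn
  rw [← b.sum_sq_inner_right, ← b.sum_inner_mul_inner, Finset.mul_sum]
  refine Finset.sum_le_sum fun i _ => ?_
  rw [real_inner_comm, hT.inner_eigenvectorBasis_apply, mul_assoc, ← sq]
  exact mul_le_mul_of_nonneg_right (h i) (sq_nonneg _)

theorem ContinuousLinearMap.IsPositive.exists_isExpandingSplitting [FiniteDimensional ℝ E]
    {A : E →L[ℝ] E} (hA : A.IsPositive) {v : E} (hv : ‖v‖ ^ 2 < ⟪A v, v⟫) :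
    ∃ U : Submodule ℝ E, U ≠ ⊥ ∧ ∃ c, 1 < c ∧ IsExpandingSplitting A U c := by
  have hT := hA.toLinearMap.isSymmetric
  set b := hT.eigenvectorBasis rfl
  set μ := hT.eigenvalues rfl
  have hbA : ∀ i d, ⟪b i, A d⟫ = μ i * ⟪b i, d⟫ := hT.inner_eigenvectorBasis_apply rfl
  have hnormA : ∀ d, ‖A d‖ ^ 2 = ∑ i, μ i ^ 2 * ⟪b i, d⟫ ^ 2 := hT.norm_sq_apply_eq_sum rfl
  obtain ⟨i₀, hi₀⟩ := hT.exists_lt_eigenvalues rfl (r := 1) (by rwa [one_mul])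
  set I := Finset.univ.filter fun i => 1 < μ i
  set c := I.inf' ⟨i₀, by simpa [I] using hi₀⟩ μ
  have hc : 1 < c := (Finset.lt_inf'_iff _).2 fun i hi => (Finset.mem_filter.1 hi).2
  -- the span of the eigenvectors with eigenvalue `> 1`
  set U : Submodule ℝ E := ⨅ j ∈ {j | μ j ≤ 1}, (ℝ ∙ b j)ᗮ
  have hmemU : ∀ u, u ∈ U ↔ ∀ j, μ j ≤ 1 → ⟪b j, u⟫ = 0 := fun u => by
    simp [U, Submodule.mem_iInf, Submodule.mem_orthogonal_singleton_iff_inner_right]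
  have hbU : ∀ i, 1 < μ i → b i ∈ U := fun i hi => (hmemU _).2 fun j hj =>
    b.orthonormal.inner_eq_zero (by rintro rfl; linarith)
  have hinv : U ∈ Module.End.invtSubmodule (A : E →ₗ[ℝ] E) :=
    (Module.End.mem_invtSubmodule_iff_forall_mem_of_mem _).2 fun u hu => by
      rw [hmemU] at hu ⊢
      exact fun j hj => (hbA j u).trans (by rw [hu j hj, mul_zero])
  refine ⟨U, (Submodule.ne_bot_iff U).2 ⟨b i₀, hbU i₀ hi₀, b.orthonormal.ne_zero i₀⟩, c, hc,
    IsExpandingSplitting.of_isSymmetric hT hinv (fun u hu => ?_) fun w hw => ?_⟩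
  · rw [hmemU] at hu
    refine (pow_le_pow_iff_left₀ (by positivity) (norm_nonneg _) two_ne_zero).1 ?_
    rw [mul_pow, hnormA, ← b.sum_sq_inner_right, Finset.mul_sum]
    refine Finset.sum_le_sum fun i _ => ?_
    by_cases hi : 1 < μ i
    · gcongr
      exact I.inf'_le μ (by simpa [I] using hi)
    · simp [hu i (not_lt.1 hi)]
  · refine (pow_le_pow_iff_left₀ (norm_nonneg _) (norm_nonneg _) two_ne_zero).1 ?_
    rw [hnormA, ← b.sum_sq_inner_right]
    refine Finset.sum_le_sum fun i _ => ?_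
    by_cases hi : 1 < μ i
    · rw [Submodule.inner_right_of_mem_orthogonal (hbU i hi) hw]
      norm_num
    · exact mul_le_of_le_one_left (sq_nonneg _)
        (pow_le_one₀ (hA.toLinearMap.nonneg_eigenvalues rfl i) (not_lt.1 hi))

theorem contDiffAt_gradient [CompleteSpace E] {f : E → ℝ} {p : E} {m n : WithTop ℕ∞}
    (hf : ContDiffAt ℝ n f p) (hmn : m + 1 ≤ n) : ContDiffAt ℝ m (gradient f) p :=
  (InnerProductSpace.toDual ℝ E).symm.contDiff.contDiffAt.comp p (hf.fderiv_right hmn)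

theorem ContDiffAt.isSymmetric_fderiv_gradient [CompleteSpace E] {f : E → ℝ} {p : E}
    (hf : ContDiffAt ℝ 2 f p) : (fderiv ℝ (gradient f) p : E →ₗ[ℝ] E).IsSymmetric := by
  intro u w
  have hH := (InnerProductSpace.toDual ℝ E).symm.comp_fderiv (f := fderiv ℝ f) (x := p)
  have hgrad : gradient f = (InnerProductSpace.toDual ℝ E).symm ∘ fderiv ℝ f := rfl
  simp only [ContinuousLinearMap.coe_coe, hgrad, hH, ContinuousLinearMap.comp_apply]
  change ⟪(InnerProductSpace.toDual ℝ E).symm _, w⟫ = ⟪u, (InnerProductSpace.toDual ℝ E).symm _⟫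
  rw [InnerProductSpace.toDual_symm_apply, real_inner_comm, InnerProductSpace.toDual_symm_apply]
  exact hf.isSymmSndFDerivAt minSmoothness_of_isRCLikeNormedField.le u w

theorem ContinuousLinearMap.isPositive_id_sub_smul {H : E →L[ℝ] E}
    (hH : (H : E →ₗ[ℝ] E).IsSymmetric) {α : ℝ} (hα : 0 ≤ α) (hαH : α * ‖H‖ ≤ 1) :
    (ContinuousLinearMap.id ℝ E - α • H).IsPositive := by
  refine (ContinuousLinearMap.isPositive_iff _).2
    ⟨LinearMap.IsSymmetric.id.sub (hH.smul (conj_trivial α)), fun x => ?_⟩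
  have hHx : ⟪H x, x⟫ ≤ ‖H‖ * ‖x‖ ^ 2 := by
    rw [sq, ← mul_assoc]
    exact (real_inner_le_norm _ _).trans
      (mul_le_mul_of_nonneg_right (H.le_opNorm x) (norm_nonneg x))
  simp only [sub_apply, ContinuousLinearMap.id_apply, smul_apply, inner_sub_left,
    real_inner_smul_left, real_inner_self_eq_norm_sq]
  nlinarith [sq_nonneg ‖x‖]

theorem Convex.volume_preimage_gradient_step_inter_eq_zero [FiniteDimensional ℝ E]
    [MeasurableSpace E] [BorelSpace E] {S : Set E} (hS : Convex ℝ S) {f : E → ℝ}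
    (hf : ∀ x ∈ S, DifferentiableAt ℝ (gradient f) x) {L α : ℝ}
    (hL : ∀ x ∈ S, ‖fderiv ℝ (gradient f) x‖ ≤ L) (hα : 0 ≤ α) (hαL : α * L < 1) {Z : Set E}
    (hZ : volume Z = 0) : volume ((fun x => x - α • gradient f x) ⁻¹' Z ∩ S) = 0 := by
  refine volume_eq_zero_of_dist_le_mul_dist (K := ⟨(1 - α * L)⁻¹, by simp; linarith⟩)
    (fun x hx y hy => ?_) (measure_mono_null (fun _ ⟨x, hx, hxz⟩ => hxz ▸ hx.1) hZ)
  have hlip : ‖gradient f x - gradient f y‖ ≤ L * ‖x - y‖ :=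
    hS.norm_image_sub_le_of_norm_fderiv_le hf hL hy.2 hx.2
  have hstep : ‖x - y‖ - α * (L * ‖x - y‖) ≤
      ‖(x - α • gradient f x) - (y - α • gradient f y)‖ := by
    calc ‖x - y‖ - α * (L * ‖x - y‖)
        ≤ ‖x - y‖ - ‖α • (gradient f x - gradient f y)‖ := by
          rw [norm_smul, Real.norm_of_nonneg hα]
          gcongr
      _ ≤ _ := by
          rw [show (x - α • gradient f x) - (y - α • gradient f y) =
            (x - y) - α • (gradient f x - gradient f y) by rw [smul_sub]; abel]
          exact norm_sub_norm_le _ _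
  change dist x y ≤ (1 - α * L)⁻¹ * dist _ _
  rw [dist_eq_norm, dist_eq_norm, inv_mul_eq_div, le_div_iff₀ (by linarith)]
  linarith

theorem exists_mem_nhds_volume_localStableSet_gradient_step_eq_zero [FiniteDimensional ℝ E]
    [MeasurableSpace E] [BorelSpace E] {f : E → ℝ} {p : E} (hf : ContDiffAt ℝ 2 f p) {α : ℝ}
    (hα : 0 < α) (hαH : α * ‖fderiv ℝ (gradient f) p‖ ≤ 1) {v : E}
    (hv : ⟪fderiv ℝ (gradient f) p v, v⟫ < 0) :
    ∃ V ∈ 𝓝 p, volume (localStableSet (fun x => x - α • gradient f x) V) = 0 := by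
  set A : E →L[ℝ] E := ContinuousLinearMap.id ℝ E - α • fderiv ℝ (gradient f) p
  have hA : A.IsPositive :=
    ContinuousLinearMap.isPositive_id_sub_smul hf.isSymmetric_fderiv_gradient hα.le hαH
  have hvA : ‖v‖ ^ 2 < ⟪A v, v⟫ := by
    simp only [A, sub_apply, ContinuousLinearMap.id_apply, smul_apply, inner_sub_left,
      real_inner_smul_left, real_inner_self_eq_norm_sq]
    nlinarith
  obtain ⟨U, hU, c, hc, hsplit⟩ := hA.exists_isExpandingSplitting hvA
  have hstrict : HasStrictFDerivAt (fun x => x - α • gradient f x) A p :=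
    (hasStrictFDerivAt_id p).sub <|
      ((contDiffAt_gradient hf one_add_one_eq_two.le).hasStrictFDerivAt one_ne_zero).const_smul α
  set ε : ℝ≥0 := ⟨(c - 1) / 8, by linarith⟩
  obtain ⟨s, hs, happrox⟩ := hstrict.approximates_deriv_on_nhds (c := ε)
    (Or.inr (show (0 : ℝ) < (c - 1) / 8 by linarith))
  refine ⟨s ∩ closedBall p 1, inter_mem hs (closedBall_mem_nhds p one_pos),
    hsplit.volume_localStableSet_eq_zero hU ?_ (isBounded_closedBall.subset inter_subset_right)
      (happrox.mono_set inter_subset_left)⟩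
  show 1 + 4 * ((c - 1) / 8) < c
  linarith

end InnerProductSpace

/-- Forward-invariant version: `S ⊆ ℝ^N` open convex, `f` twice
continuously differentiable on `S` with `‖∇²f‖ ≤ L` on `S`, step size
`0 < α < 1/L`, and the gradient descent map `g x = x - α • ∇f x` satisfies
`g(S) ⊆ S`. Then the set of initial conditions in `S` from which the gradient
descent iterates converge to a strict saddle point (a critical point whose
Hessian has a strictly negative eigenvalue, equivalently the quadratic form
takes a negative value) has Lebesgue measure zero. -/
theorem gradient_descent_avoids_strict_saddles_forward_invariant
    {N : ℕ} (S : Set (EuclideanSpace ℝ (Fin N))) (hS : IsOpen S) (hconv : Convex ℝ S)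
    (f : EuclideanSpace ℝ (Fin N) → ℝ) (hf : ContDiffOn ℝ 2 f S)
    (L : ℝ) (hL : ∀ x ∈ S, ‖fderiv ℝ (gradient f) x‖ ≤ L)
    (α : ℝ) (hα : 0 < α) (hαL : α < 1 / L)
    (g : EuclideanSpace ℝ (Fin N) → EuclideanSpace ℝ (Fin N))
    (hg : ∀ x, g x = x - α • gradient f x)
    (hinv : Set.MapsTo g S S) :
    volume {x ∈ S | ∃ p ∈ S, (gradient f p = 0 ∧
        ∃ v : EuclideanSpace ℝ (Fin N),
          (inner ℝ (fderiv ℝ (gradient f) p v) v : ℝ) < 0) ∧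
      Tendsto (fun k => g^[k] x) atTop (𝓝 p)} = 0 := by
  have hL0 : 0 < L := by
    by_contra! hL0
    exact (one_div_nonpos.2 hL0).not_gt (hα.trans hαL)
  have hαL' : α * L < 1 := (lt_div_iff₀ hL0).1 hαL
  have hf2 : ∀ p ∈ S, ContDiffAt ℝ 2 f p := fun p hp => hf.contDiffAt (hS.mem_nhds hp)
  obtain rfl : g = fun x => x - α • gradient f x := funext hg
  refine measure_mono_null ?_ (measure_setOf_tendsto_eq_zero
    (P := {p ∈ S | ∃ v, ⟪fderiv ℝ (gradient f) p v, v⟫ < 0}) hinv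
    (fun Z hZ => hconv.volume_preimage_gradient_step_inter_eq_zero (fun x hx =>
      (contDiffAt_gradient (hf2 x hx) one_add_one_eq_two.le).differentiableAt one_ne_zero)
      hL hα.le hαL' hZ) ?_)
  · rintro x ⟨hx, p, hp, ⟨-, hsaddle⟩, hlim⟩
    exact ⟨hx, p, ⟨hp, hsaddle⟩, hlim⟩
  · rintro p ⟨hp, v, hv⟩
    exact exists_mem_nhds_volume_localStableSet_gradient_step_eq_zero (hf2 p hp) hα
      ((mul_le_mul_of_nonneg_left (hL p hp) hα.le).trans hαL'.le) hv
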